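/- Let T be a Set-functor and Λ a set of monotone fuzzy predicate liftings for T that is closed under duals. Then for every pseudometric d : A × A → [0,1], K_Λ d = d^{↑T}, where d^{↑T}(t₁,t₂) = sup { |λ_A(f₁,…,fₙ)(t₁) − λ_A(f₁,…,fₙ)(t₂)| : λ ∈ Λ n-ary, each fᵢ : A → [0,1] nonexpansive from (A,d) to ([0,1], Euclidean distance) }. -/

import Mathlib

open unitInterval

noncomputable section

instance : Fact ((0:ℝ) ≤ 1) := ⟨zero_le_one⟩

/-- A fuzzy relation between `A` and `B` is a map `A × B → [0,1]`. -/
abbrev FRel (A B : Type) : Type := A → B → I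

/-- Clamp a real number into the unit interval. -/
def clamp (x : ℝ) : I := Set.projIcc 0 1 zero_le_one x

/-- Composition of fuzzy relations: `(R;S)(a,c) = inf_b min(R(a,b) + S(b,c), 1)`. -/
def fcomp {A B C : Type} (R : FRel A B) (S : FRel B C) : FRel A C :=
  fun a c => ⨅ b : B, clamp ((R a b : ℝ) + (S b c : ℝ))

/-- Converse of a fuzzy relation. -/
def fconv {A B : Type} (R : FRel A B) : FRel B A := fun b a => R a b

open scoped Classical in
/-- The `ε`-graph of a function. -/
def fgraphE {A B : Type} (ε : I) (f : A → B) : FRel A B :=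
  fun a b => if f a = b then ε else 1

/-- The graph of a function. -/
def fgraph {A B : Type} (f : A → B) : FRel A B := fgraphE 0 f

/-- The `ε`-diagonal. -/
def fdiagE (ε : I) (A : Type) : FRel A A := fgraphE ε (id : A → A)

/-- The diagonal. -/
def fdiag (A : Type) : FRel A A := fgraph (id : A → A)

/-- A Set-functor. -/
structure SetFunctor where
  obj : Type → Type
  map : {A B : Type} → (A → B) → obj A → obj B
  map_id : ∀ (A : Type), map (id : A → A) = id
  map_comp : ∀ {A B C : Type} (f : A → B) (g : B → C), map (g ∘ f) = map g ∘ map f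

/-- A fuzzy lax extension of a Set-functor. -/
structure LaxExt (T : SetFunctor) where
  lift : {A B : Type} → FRel A B → FRel (T.obj A) (T.obj B)
  mono : ∀ {A B : Type} (R S : FRel A B), R ≤ S → lift R ≤ lift S
  lax_comp : ∀ {A B C : Type} (R : FRel A B) (S : FRel B C),
    lift (fcomp R S) ≤ fcomp (lift R) (lift S)
  lax_graph : ∀ {A B : Type} (f : A → B), lift (fgraph f) ≤ fgraph (T.map f)
  lax_graph_conv : ∀ {A B : Type} (f : A → B),
    lift (fconv (fgraph f)) ≤ fconv (fgraph (T.map f))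

end

/-- A pair `(f,g)` is `R`-nonexpansive if `f(a) − g(b) ≤ R(a,b)` for all `a, b`. -/
def RNonexp {A B : Type} (R : FRel A B) (f : A → I) (g : B → I) : Prop :=
  ∀ a b, (f a : ℝ) - (g b : ℝ) ≤ (R a b : ℝ)

/-- The nonexpansive companion `R[f](b) = sup_a max(f(a) − R(a,b), 0)`. -/
noncomputable def companion {A B : Type} (R : FRel A B) (f : A → I) : B → I :=
  fun b => ⨆ a : A, clamp ((f a : ℝ) - (R a b : ℝ))

/-- An `n`-ary fuzzy predicate lifting for `T`: a natural transformation `Q^n ⇒ Q ∘ T`,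
where `QX = (X → [0,1])` is the contravariant fuzzy powerset functor. -/
structure PredLift (T : SetFunctor) (n : ℕ) where
  app : (X : Type) → (Fin n → (X → I)) → T.obj X → I
  natural : ∀ {X Y : Type} (f : X → Y) (g : Fin n → (Y → I)) (t : T.obj X),
    app X (fun i => (g i) ∘ f) t = app Y g (T.map f t)

/-- A predicate lifting is monotone if it preserves the pointwise order in each argument. -/
def PredLiftMonotone (T : SetFunctor) {n : ℕ} (l : PredLift T n) : Prop :=
  ∀ (X : Type) (f g : Fin n → (X → I)), (∀ i, f i ≤ g i) → ∀ t, l.app X f t ≤ l.app X g t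

/-- A predicate lifting is nonexpansive if the sup-norm of `λ(f) − λ(g)` is bounded by the
maximum over `i` of the sup-norm of `fᵢ − gᵢ`. -/
def PredLiftNonexp (T : SetFunctor) {n : ℕ} (l : PredLift T n) : Prop :=
  ∀ (X : Type) (f g : Fin n → (X → I)) (t : T.obj X),
    |(l.app X f t : ℝ) - (l.app X g t : ℝ)| ≤
      ⨆ p : Fin n × X, |(f p.1 p.2 : ℝ) - (g p.1 p.2 : ℝ)|

/-- The dual predicate lifting `λ̄(f₁,…,fₙ) = 1 − λ(1−f₁,…,1−fₙ)`. -/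
def PredLift.dual {T : SetFunctor} {n : ℕ} (l : PredLift T n) : PredLift T n where
  app X f t := unitInterval.symm (l.app X (fun i x => unitInterval.symm (f i x)) t)
  natural := by
    intro X Y f g t
    exact congrArg unitInterval.symm
      (l.natural f (fun i y => unitInterval.symm (g i y)) t)

/-- The Kantorovich lifting induced by a set `Λ` of predicate liftings. -/
noncomputable def kantorovich (T : SetFunctor) (Λ : Set (Σ n, PredLift T n))
    {A B : Type} (R : FRel A B) : FRel (T.obj A) (T.obj B) :=
  fun t₁ t₂ => ⨆ l : Λ,
    ⨆ fg : {fg : (Fin l.1.1 → (A → I)) × (Fin l.1.1 → (B → I)) //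
        ∀ i, RNonexp R (fg.1 i) (fg.2 i)},
      clamp ((l.1.2.app A fg.1.1 t₁ : ℝ) - (l.1.2.app B fg.1.2 t₂ : ℝ))

/-- `d` is a pseudometric on `X`. -/
def IsPseudometric {X : Type} (d : FRel X X) : Prop :=
  ((∀ x, d x x = 0) ∧ ∀ x y z, (d x z : ℝ) ≤ (d x y : ℝ) + (d y z : ℝ)) ∧
    ∀ x y, d x y = d y x

/-!
For a `d`-nonexpansive pair `(f, g)` the companion `d[f]` satisfies `f ≤ d[f] ≤ g` and is
nonexpansive for the pseudometric `d`, so by monotonicity of `λ` every term of `K_Λ d` is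
dominated by the term `λ(d[f])(t₁) − λ(d[f])(t₂)` of `d^{↑T}`. Conversely a `d`-nonexpansive
`f` gives the pair `(f, f)`, which bounds `λ(f)(t₁) − λ(f)(t₂)` by `K_Λ d`; the opposite
difference is `λ̄(1 − f)(t₁) − λ̄(1 − f)(t₂)`, and `λ̄ ∈ Λ`.
-/

lemma coe_clamp (x : ℝ) : (clamp x : ℝ) = max 0 (min 1 x) := rfl

lemma clamp_coe (x : I) : clamp (x : ℝ) = x := Set.projIcc_val zero_le_one x

lemma clamp_mono : Monotone clamp := Set.monotone_projIcc zero_le_one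

lemma le_coe_clamp {x : ℝ} (h : x ≤ 1) : x ≤ (clamp x : ℝ) := by
  rw [coe_clamp, min_eq_right h]
  exact le_max_right _ _

lemma coe_clamp_le {x : ℝ} (h : 0 ≤ x) : (clamp x : ℝ) ≤ x := by
  rw [coe_clamp, max_eq_right (le_min zero_le_one h)]
  exact min_le_right _ _

lemma clamp_le_add_clamp {x y c : ℝ} (hc : 0 ≤ c) (h : x ≤ c + y) :
    (clamp x : ℝ) ≤ c + (clamp y : ℝ) := by
  simp only [coe_clamp]
  grind

namespace unitInterval

lemma sub_le_one (x y : I) : (x : ℝ) - (y : ℝ) ≤ 1 := by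
  linarith [x.2.2, y.2.1]

lemma abs_sub_le_one (x y : I) : |(x : ℝ) - (y : ℝ)| ≤ 1 :=
  abs_sub_le_iff.2 ⟨sub_le_one x y, sub_le_one y x⟩

end unitInterval

lemma abs_sub_le_of_rNonexp_self {A : Type} {d : FRel A A} (hsymm : ∀ x y, d x y = d y x)
    {f : A → I} (hf : RNonexp d f f) (a b : A) : |(f a : ℝ) - (f b : ℝ)| ≤ (d a b : ℝ) :=
  abs_sub_le_iff.2 ⟨hf a b, hsymm a b ▸ hf b a⟩

lemma rNonexp_self_of_abs_sub_le {A : Type} {d : FRel A A} {f : A → I}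
    (hf : ∀ a b, |(f a : ℝ) - (f b : ℝ)| ≤ (d a b : ℝ)) : RNonexp d f f :=
  fun a b => (le_abs_self _).trans (hf a b)

section Companion

variable {A B : Type}

lemma coe_companion [Nonempty A] (R : FRel A B) (f : A → I) (b : B) :
    (companion R f b : ℝ) = ⨆ a : A, (clamp ((f a : ℝ) - (R a b : ℝ)) : ℝ) :=
  Set.Icc.coe_iSup zero_le_one

lemma companion_le_of_rNonexp {R : FRel A B} {f : A → I} {g : B → I} (h : RNonexp R f g) :
    companion R f ≤ g := fun b =>
  iSup_le fun a => (clamp_mono (by linarith [h a b])).trans_eq (clamp_coe (g b))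

lemma le_companion {d : FRel A A} (hrefl : ∀ a, d a a = 0) (f : A → I) :
    f ≤ companion d f := fun a =>
  calc f a = clamp ((f a : ℝ) - (d a a : ℝ)) := by
        rw [hrefl, Set.Icc.coe_zero, sub_zero, clamp_coe]
    _ ≤ companion d f a := le_iSup (fun a' => clamp ((f a' : ℝ) - (d a' a : ℝ))) a

lemma rNonexp_companion {d : FRel A A}
    (htri : ∀ x y z, (d x z : ℝ) ≤ (d x y : ℝ) + (d y z : ℝ)) (f : A → I) :
    RNonexp d (companion d f) (companion d f) := by
  intro a b
  have : Nonempty A := ⟨a⟩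
  rw [sub_le_iff_le_add, coe_companion]
  refine Real.iSup_le (fun a' => ?_) (add_nonneg (d a b).2.1 (companion d f b).2.1)
  calc (clamp ((f a' : ℝ) - (d a' a : ℝ)) : ℝ)
      ≤ (d a b : ℝ) + (clamp ((f a' : ℝ) - (d a' b : ℝ)) : ℝ) :=
        clamp_le_add_clamp (d a b).2.1 (by linarith [htri a' a b])
    _ ≤ (d a b : ℝ) + (companion d f b : ℝ) := by
        gcongr
        exact le_iSup (fun a' => clamp ((f a' : ℝ) - (d a' b : ℝ))) a'

end Companion

lemma PredLift.dual_app_symm {T : SetFunctor} {n : ℕ} (l : PredLift T n) (X : Type)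
    (f : Fin n → X → I) (t : T.obj X) :
    l.dual.app X (fun i x => symm (f i x)) t = symm (l.app X f t) := by
  simp only [PredLift.dual, symm_symm]

section Kantorovich

variable {T : SetFunctor} {Λ : Set (Σ n, PredLift T n)} {A B : Type} {R : FRel A B}
  {t₁ : T.obj A} {t₂ : T.obj B}

lemma app_sub_app_le_kantorovich {l : Σ n, PredLift T n} (hl : l ∈ Λ)
    {f : Fin l.1 → A → I} {g : Fin l.1 → B → I} (hfg : ∀ i, RNonexp R (f i) (g i)) :
    (l.2.app A f t₁ : ℝ) - (l.2.app B g t₂ : ℝ) ≤ (kantorovich T Λ R t₁ t₂ : ℝ) := by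
  refine (le_coe_clamp (sub_le_one _ _)).trans (Subtype.coe_le_coe.2 ?_)
  exact le_iSup_of_le (⟨l, hl⟩ : Λ)
    (le_iSup_of_le (⟨(f, g), hfg⟩ : {fg : (Fin l.1 → A → I) × (Fin l.1 → B → I) //
      ∀ i, RNonexp R (fg.1 i) (fg.2 i)}) le_rfl)

lemma kantorovich_le {c : ℝ} (hc : 0 ≤ c)
    (h : ∀ l ∈ Λ, ∀ (f : Fin l.1 → A → I) (g : Fin l.1 → B → I),
      (∀ i, RNonexp R (f i) (g i)) → (l.2.app A f t₁ : ℝ) - (l.2.app B g t₂ : ℝ) ≤ c) :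
    (kantorovich T Λ R t₁ t₂ : ℝ) ≤ c := by
  refine le_trans (Subtype.coe_le_coe.2 ?_) (coe_clamp_le hc)
  exact iSup_le fun l => iSup_le fun fg => clamp_mono (h l.1 l.2 fg.1.1 fg.1.2 fg.2)

end Kantorovich

/-- The Kantorovich pseudometric lifting `d^{↑T}`. -/
noncomputable def pseudometricLift (T : SetFunctor) (Λ : Set (Σ n, PredLift T n)) {A : Type}
    (d : FRel A A) (t₁ t₂ : T.obj A) : ℝ :=
  ⨆ l : Λ, ⨆ f : {f : Fin l.1.1 → (A → I) //
      ∀ i a b, |(f i a : ℝ) - (f i b : ℝ)| ≤ (d a b : ℝ)},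
    |(l.1.2.app A f.1 t₁ : ℝ) - (l.1.2.app A f.1 t₂ : ℝ)|

section PseudometricLift

variable {T : SetFunctor} {Λ : Set (Σ n, PredLift T n)} {A : Type} {d : FRel A A}
  {t₁ t₂ : T.obj A}

lemma pseudometricLift_nonneg : 0 ≤ pseudometricLift T Λ d t₁ t₂ :=
  Real.iSup_nonneg fun _ => Real.iSup_nonneg fun _ => abs_nonneg _

lemma le_pseudometricLift {l : Σ n, PredLift T n} (hl : l ∈ Λ) {f : Fin l.1 → A → I}
    (hf : ∀ i a b, |(f i a : ℝ) - (f i b : ℝ)| ≤ (d a b : ℝ)) :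
    |(l.2.app A f t₁ : ℝ) - (l.2.app A f t₂ : ℝ)| ≤ pseudometricLift T Λ d t₁ t₂ := by
  have bdd : ∀ l : Λ, BddAbove (Set.range fun f : {f : Fin l.1.1 → (A → I) //
      ∀ i a b, |(f i a : ℝ) - (f i b : ℝ)| ≤ (d a b : ℝ)} =>
        |(l.1.2.app A f.1 t₁ : ℝ) - (l.1.2.app A f.1 t₂ : ℝ)|) :=
    fun _ => ⟨1, by rintro _ ⟨f, rfl⟩; exact abs_sub_le_one _ _⟩
  have bdd_iSup : BddAbove (Set.range fun l : Λ => ⨆ f : {f : Fin l.1.1 → (A → I) //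
      ∀ i a b, |(f i a : ℝ) - (f i b : ℝ)| ≤ (d a b : ℝ)},
        |(l.1.2.app A f.1 t₁ : ℝ) - (l.1.2.app A f.1 t₂ : ℝ)|) :=
    ⟨1, by rintro _ ⟨l, rfl⟩; exact Real.iSup_le (fun f => abs_sub_le_one _ _) zero_le_one⟩
  exact (le_ciSup (bdd ⟨l, hl⟩) ⟨f, hf⟩).trans (le_ciSup bdd_iSup ⟨l, hl⟩)

lemma pseudometricLift_le {c : ℝ} (hc : 0 ≤ c)
    (h : ∀ l ∈ Λ, ∀ f : Fin l.1 → A → I, (∀ i a b, |(f i a : ℝ) - (f i b : ℝ)| ≤ (d a b : ℝ)) →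
      |(l.2.app A f t₁ : ℝ) - (l.2.app A f t₂ : ℝ)| ≤ c) :
    pseudometricLift T Λ d t₁ t₂ ≤ c :=
  Real.iSup_le (fun l => Real.iSup_le (fun f => h l.1 l.2 f.1 f.2) hc) hc

end PseudometricLift

section Comparison

variable {T : SetFunctor} {Λ : Set (Σ n, PredLift T n)} {A : Type} {d : FRel A A}
  {t₁ t₂ : T.obj A}

lemma kantorovich_le_pseudometricLift (hmono : ∀ l ∈ Λ, PredLiftMonotone T l.2)
    (hd : IsPseudometric d) :
    (kantorovich T Λ d t₁ t₂ : ℝ) ≤ pseudometricLift T Λ d t₁ t₂ := by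
  obtain ⟨⟨hrefl, htri⟩, hsymm⟩ := hd
  refine kantorovich_le pseudometricLift_nonneg fun l hl f g hfg => ?_
  set F := fun i => companion d (f i)
  have hfF : l.2.app A f t₁ ≤ l.2.app A F t₁ :=
    hmono l hl A f F (fun i => le_companion hrefl (f i)) t₁
  have hFg : l.2.app A F t₂ ≤ l.2.app A g t₂ :=
    hmono l hl A F g (fun i => companion_le_of_rNonexp (hfg i)) t₂
  have hF : |(l.2.app A F t₁ : ℝ) - (l.2.app A F t₂ : ℝ)| ≤ pseudometricLift T Λ d t₁ t₂ :=
    le_pseudometricLift hl fun i =>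
      abs_sub_le_of_rNonexp_self hsymm (rNonexp_companion htri (f i))
  have := le_abs_self ((l.2.app A F t₁ : ℝ) - (l.2.app A F t₂ : ℝ))
  linarith [Subtype.coe_le_coe.2 hfF, Subtype.coe_le_coe.2 hFg]

lemma abs_app_sub_app_le_kantorovich
    (hdual : ∀ l ∈ Λ, (⟨l.1, PredLift.dual l.2⟩ : Σ n, PredLift T n) ∈ Λ)
    {l : Σ n, PredLift T n} (hl : l ∈ Λ) {f : Fin l.1 → A → I}
    (hf : ∀ i a b, |(f i a : ℝ) - (f i b : ℝ)| ≤ (d a b : ℝ)) :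
    |(l.2.app A f t₁ : ℝ) - (l.2.app A f t₂ : ℝ)| ≤ (kantorovich T Λ d t₁ t₂ : ℝ) := by
  refine abs_sub_le_iff.2
    ⟨app_sub_app_le_kantorovich hl fun i => rNonexp_self_of_abs_sub_le (hf i), ?_⟩
  have hf' : ∀ i a b, |((symm (f i a) : I) : ℝ) - (symm (f i b) : ℝ)| ≤ (d a b : ℝ) := by
    intro i a b
    rw [coe_symm_eq, coe_symm_eq, sub_sub_sub_cancel_left, abs_sub_comm]
    exact hf i a b
  have key := app_sub_app_le_kantorovich (t₁ := t₁) (t₂ := t₂) (hdual l hl)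
    fun i => rNonexp_self_of_abs_sub_le (hf' i)
  simp only [PredLift.dual_app_symm, coe_symm_eq] at key
  linarith

lemma pseudometricLift_le_kantorovich
    (hdual : ∀ l ∈ Λ, (⟨l.1, PredLift.dual l.2⟩ : Σ n, PredLift T n) ∈ Λ) :
    pseudometricLift T Λ d t₁ t₂ ≤ (kantorovich T Λ d t₁ t₂ : ℝ) :=
  pseudometricLift_le (kantorovich T Λ d t₁ t₂).2.1 fun _ hl _ hf =>
    abs_app_sub_app_le_kantorovich hdual hl hf

end Comparison

/-- on pseudometrics, the Kantorovich lifting for a dual-closed set of monotone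
predicate liftings agrees with the usual Kantorovich pseudometric lifting `d^{↑T}`. -/
theorem kantorovich_agrees_on_pseudometrics (T : SetFunctor)
    (Λ : Set (Σ n, PredLift T n))
    (hmono : ∀ l ∈ Λ, PredLiftMonotone T l.2)
    (hdual : ∀ l ∈ Λ, (⟨l.1, PredLift.dual l.2⟩ : Σ n, PredLift T n) ∈ Λ)
    (A : Type) (d : FRel A A) (hd : IsPseudometric d) (t₁ t₂ : T.obj A) :
    (kantorovich T Λ d t₁ t₂ : ℝ) =
      ⨆ l : Λ, ⨆ f : {f : Fin l.1.1 → (A → I) //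
          ∀ i a b, |(f i a : ℝ) - (f i b : ℝ)| ≤ (d a b : ℝ)},
        |(l.1.2.app A f.1 t₁ : ℝ) - (l.1.2.app A f.1 t₂ : ℝ)| :=
  le_antisymm (kantorovich_le_pseudometricLift hmono hd) (pseudometricLift_le_kantorovich hdual)
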